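/- Suppose the system response Θ̃ = {R̃, M̃, Ñ, L̃} satisfies the robust SLS constraints for the plant (A, B₂, C₂) with perturbations (Δ₁, Δ₂), and suppose (I + Δ₁)⁻¹ exists and belongs to RH∞. Define Θ̂ = {R̂, M̂, N̂, L̂} by R̂ = (I + Δ₁)⁻¹R̃, M̂ = M̃ − Δ₂(I + Δ₁)⁻¹R̃, N̂ = (I + Δ₁)⁻¹Ñ, L̂ = L̃ − Δ₂(I + Δ₁)⁻¹Ñ. Then Θ̂ satisfies the SLS constraints for (A, B₂, C₂). -/

import Mathlib

/- Preliminaries: transfer functions as real rational functions, RH∞, H∞ norms,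
   System-Level Synthesis (SLS) constraints, controllers, closed-loop responses,
   coarse-grained identification, Gaussian vectors. -/

noncomputable section
open scoped Matrix BigOperators ENNReal
open MeasureTheory ProbabilityTheory Polynomial

namespace SLS

/-- Scalar transfer functions: real rational functions in `z`. -/
abbrev TF : Type := RatFunc ℝ

/-- Transfer matrices. -/
abbrev TMat (m n : ℕ) : Type := Matrix (Fin m) (Fin n) TF

/-- Embed a real matrix as a (constant) transfer matrix. -/
def rmap {m n : ℕ} (A : Matrix (Fin m) (Fin n) ℝ) : TMat m n := A.map RatFunc.C

/-- Evaluate a scalar transfer function at a complex point. -/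
def evalTF (f : TF) (z : ℂ) : ℂ :=
  (f.num.map (algebraMap ℝ ℂ)).eval z / (f.denom.map (algebraMap ℝ ℂ)).eval z

/-- Evaluate a transfer matrix at a complex point. -/
def evalMat {m n : ℕ} (F : TMat m n) (z : ℂ) : Matrix (Fin m) (Fin n) ℂ :=
  Matrix.of fun i j => evalTF (F i j) z

/-- Spectral norm (ℓ2 → ℓ2 operator norm) of a matrix over `ℝ` or `ℂ`. -/
def specNorm {𝕜 : Type} [RCLike 𝕜] {m n : ℕ} (M : Matrix (Fin m) (Fin n) 𝕜) : ℝ :=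
  ‖LinearMap.toContinuousLinearMap (Matrix.toEuclideanLin M)‖

/-- H∞ norm of a transfer matrix: sup over the unit circle of the spectral norm. -/
def hinfNorm {m n : ℕ} (F : TMat m n) : ℝ :=
  sSup {x : ℝ | ∃ z : ℂ, ‖z‖ = 1 ∧ x = specNorm (evalMat F z)}

/-- H∞ norm of a scalar transfer function. -/
def hinfNormTF (f : TF) : ℝ :=
  sSup {x : ℝ | ∃ z : ℂ, ‖z‖ = 1 ∧ x = ‖evalTF f z‖}

/-- A scalar transfer function is proper if its numerator degree does not exceed
its denominator degree. -/
def ProperTF (f : TF) : Prop := f.num.degree ≤ f.denom.degree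

/-- Strictly proper: vanishes at `z = ∞`. -/
def StrictlyProperTF (f : TF) : Prop := f.num.degree < f.denom.degree

/-- Stable: all poles lie strictly inside the open unit disk. -/
def StableTF (f : TF) : Prop :=
  ∀ z : ℂ, (f.denom.map (algebraMap ℝ ℂ)).eval z = 0 → ‖z‖ < 1

/-- Membership in RH∞ for scalar transfer functions: proper and stable. -/
def MemRHinfTF (f : TF) : Prop := ProperTF f ∧ StableTF f

/-- Membership in RH∞ for transfer matrices (entrywise). -/
def MemRHinf {m n : ℕ} (F : TMat m n) : Prop := ∀ i j, MemRHinfTF (F i j)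

/-- Strict properness of a transfer matrix (entrywise). -/
def StrictlyProper {m n : ℕ} (F : TMat m n) : Prop := ∀ i j, StrictlyProperTF (F i j)

/-- The transfer matrix `zI - A` for a real matrix `A`. -/
def zIA {n : ℕ} (A : Matrix (Fin n) (Fin n) ℝ) : TMat n n :=
  Matrix.diagonal (fun _ => (RatFunc.X : TF)) - rmap A

/-- A system response `Θ = {R, M, N, L}` for a plant with `n` states, `p` control
inputs and `q` measured outputs. -/
structure Response (n p q : ℕ) where
  R : TMat n n
  M : TMat p n
  N : TMat n q
  L : TMat p q

/-- The stability part of the SLS constraints: `R, M, N` strictly proper in RH∞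
and `L ∈ RH∞`. -/
def SLSStable {n p q : ℕ} (Θ : Response n p q) : Prop :=
  StrictlyProper Θ.R ∧ StrictlyProper Θ.M ∧ StrictlyProper Θ.N ∧
  MemRHinf Θ.R ∧ MemRHinf Θ.M ∧ MemRHinf Θ.N ∧ MemRHinf Θ.L

/-- The SLS constraints for the plant `(A, B₂, C₂)`:
`[zI − A, −B₂]·[[R, N],[M, L]] = [I, 0]`, `[[R, N],[M, L]]·[zI − A; −C₂] = [I; 0]`,
written blockwise, together with the stability conditions. -/
def SLSConstraints {n p q : ℕ} (A : Matrix (Fin n) (Fin n) ℝ)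
    (B₂ : Matrix (Fin n) (Fin p) ℝ) (C₂ : Matrix (Fin q) (Fin n) ℝ)
    (Θ : Response n p q) : Prop :=
  zIA A * Θ.R - rmap B₂ * Θ.M = 1 ∧
  zIA A * Θ.N - rmap B₂ * Θ.L = 0 ∧
  Θ.R * zIA A - Θ.N * rmap C₂ = 1 ∧
  Θ.M * zIA A - Θ.L * rmap C₂ = 0 ∧
  SLSStable Θ

/-- The robust SLS constraints with perturbations `(Δ₁, Δ₂)`: the second block
equation becomes `[[R, N],[M, L]]·[zI − A; −C₂] = [I + Δ₁; Δ₂]`. -/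
def RobustSLSConstraints {n p q : ℕ} (A : Matrix (Fin n) (Fin n) ℝ)
    (B₂ : Matrix (Fin n) (Fin p) ℝ) (C₂ : Matrix (Fin q) (Fin n) ℝ)
    (Δ₁ : TMat n n) (Δ₂ : TMat p n) (Θ : Response n p q) : Prop :=
  zIA A * Θ.R - rmap B₂ * Θ.M = 1 ∧
  zIA A * Θ.N - rmap B₂ * Θ.L = 0 ∧
  Θ.R * zIA A - Θ.N * rmap C₂ = 1 + Δ₁ ∧
  Θ.M * zIA A - Θ.L * rmap C₂ = Δ₂ ∧
  SLSStable Θ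

/-- The controller `K = L − M R⁻¹ N` induced by a system response. -/
def controller {n p q : ℕ} (Θ : Response n p q) : TMat p q :=
  Θ.L - Θ.M * Θ.R⁻¹ * Θ.N

/-- `K` achieves the closed-loop response `Θ'` on the plant `(A, B₂, C₂)`: in the
feedback loop `x = (zI − A)⁻¹(B₂u + δx)`, `y = C₂x + δy`, `u = Ky`, the transfer
matrices from `(δx, δy)` to `(x, u)` equal `[[R', N'],[M', L']]`. -/
def Achieves {n p q : ℕ} (A : Matrix (Fin n) (Fin n) ℝ)
    (B₂ : Matrix (Fin n) (Fin p) ℝ) (C₂ : Matrix (Fin q) (Fin n) ℝ)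
    (K : TMat p q) (Θ' : Response n p q) : Prop :=
  zIA A * Θ'.R = rmap B₂ * Θ'.M + 1 ∧
  zIA A * Θ'.N = rmap B₂ * Θ'.L ∧
  Θ'.M = K * rmap C₂ * Θ'.R ∧
  Θ'.L = K * rmap C₂ * Θ'.N + K

/-- `K` internally stabilizes the plant `(A, B₂, C₂)`: the four closed-loop
transfer matrices exist, `R', M', N'` are strictly proper, and all four lie in RH∞. -/
def InternallyStabilizes {n p q : ℕ} (A : Matrix (Fin n) (Fin n) ℝ)
    (B₂ : Matrix (Fin n) (Fin p) ℝ) (C₂ : Matrix (Fin q) (Fin n) ℝ)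
    (K : TMat p q) : Prop :=
  ∃ Θ' : Response n p q, Achieves A B₂ C₂ K Θ' ∧ SLSStable Θ'

/-! ### FIR SISO plants -/

/-- The down-shift matrix (ones on the subdiagonal). -/
def shiftMat (n : ℕ) : Matrix (Fin n) (Fin n) ℝ :=
  Matrix.of fun i j => if (i : ℕ) = (j : ℕ) + 1 then 1 else 0

/-- The first standard basis vector, as a column matrix. -/
def e1 (n : ℕ) : Matrix (Fin n) (Fin 1) ℝ :=
  Matrix.of fun i _ => if (i : ℕ) = 0 then 1 else 0

/-- A vector as a row matrix (`gᵀ`). -/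
def rowVec {n : ℕ} (g : Fin n → ℝ) : Matrix (Fin 1) (Fin n) ℝ :=
  Matrix.of fun _ j => g j

/-- The matrix `C₁ = [gᵀ; 0]`. -/
def C1mat {n : ℕ} (g : Fin n → ℝ) : Matrix (Fin 2) (Fin n) ℝ :=
  Matrix.of fun i j => if (i : ℕ) = 0 then g j else 0

/-- The matrix `D₁₂ = [0; 1]`. -/
def D12mat : Matrix (Fin 2) (Fin 1) ℝ :=
  Matrix.of fun i _ => if (i : ℕ) = 1 then 1 else 0

/-- Stack two scalar transfer functions into a 2×1 transfer matrix `[a; b]`. -/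
def col2 (a b : TF) : TMat 2 1 :=
  Matrix.of fun i _ => if (i : ℕ) = 0 then a else b

/-- The H∞ cost `J(g, Θ) = ‖[C₁, D₁₂]·[[R, N],[M, L]]·[B₁; D₂₁] + D₁₁‖` of a
system response for the generalized plant built from FIR coefficients `g`. -/
def cost {n nw : ℕ} (g : Fin n → ℝ) (B₁ : Matrix (Fin n) (Fin nw) ℝ)
    (D₂₁ : Matrix (Fin 1) (Fin nw) ℝ) (D₁₁ : Matrix (Fin 2) (Fin nw) ℝ)
    (Θ : Response n 1 1) : ℝ :=
  hinfNorm ((rmap (C1mat g) * Θ.R + rmap D12mat * Θ.M) * rmap B₁ +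
    (rmap (C1mat g) * Θ.N + rmap D12mat * Θ.L) * rmap D₂₁ + rmap D₁₁)

/-- The transfer matrix `[1 + g̃ᵀÑ; L̃]` and its H∞ norm. -/
def perfWeight {n : ℕ} (g : Fin n → ℝ) (Θ : Response n 1 1) : ℝ :=
  hinfNorm (col2 (1 + (rmap (rowVec g) * Θ.N) 0 0) (Θ.L 0 0))

/-- The robust SLS objective `Q(g̃, Θ̃, α) = J(g̃, Θ̃) + εα‖R̃B₁ + ÑD₂₁‖`. -/
def Qval {n nw : ℕ} (g : Fin n → ℝ) (B₁ : Matrix (Fin n) (Fin nw) ℝ)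
    (D₂₁ : Matrix (Fin 1) (Fin nw) ℝ) (D₁₁ : Matrix (Fin 2) (Fin nw) ℝ)
    (ε : ℝ) (Θ : Response n 1 1) (α : ℝ) : ℝ :=
  cost g B₁ D₂₁ D₁₁ Θ + ε * α * hinfNorm (Θ.R * rmap B₁ + Θ.N * rmap D₂₁)

/-- Feasibility for the robust SLS problem for the estimate `g̃` with uncertainty
parameter `ε`: `α > 0`, `Θ̃` satisfies the SLS constraints for `(Z, e₁, g̃ᵀ)`, and
`εα‖Ñ‖ + ‖[1 + g̃ᵀÑ; L̃]‖ ≤ α`. -/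
def RobustFeasible {n : ℕ} (g : Fin n → ℝ) (ε : ℝ) (Θ : Response n 1 1) (α : ℝ) : Prop :=
  0 < α ∧ SLSConstraints (shiftMat n) (e1 n) (rowVec g) Θ ∧
  ε * α * hinfNorm Θ.N + perfWeight g Θ ≤ α

/-- `(Θ̃, α)` is a minimizer of the robust SLS problem for `g̃`. -/
def RobustOptimal {n nw : ℕ} (g : Fin n → ℝ) (B₁ : Matrix (Fin n) (Fin nw) ℝ)
    (D₂₁ : Matrix (Fin 1) (Fin nw) ℝ) (D₁₁ : Matrix (Fin 2) (Fin nw) ℝ)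
    (ε : ℝ) (Θ : Response n 1 1) (α : ℝ) : Prop :=
  RobustFeasible g ε Θ α ∧
  ∀ Θ' α', RobustFeasible g ε Θ' α' → Qval g B₁ D₂₁ D₁₁ ε Θ α ≤ Qval g B₁ D₂₁ D₁₁ ε Θ' α'

/-- `Θ₀` is a minimizer of `J(g, ·)` over responses satisfying the SLS constraints
for the plant `(Z, e₁, gᵀ)`. -/
def OptimalResponse {n nw : ℕ} (g : Fin n → ℝ) (B₁ : Matrix (Fin n) (Fin nw) ℝ)
    (D₂₁ : Matrix (Fin 1) (Fin nw) ℝ) (D₁₁ : Matrix (Fin 2) (Fin nw) ℝ)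
    (Θ : Response n 1 1) : Prop :=
  SLSConstraints (shiftMat n) (e1 n) (rowVec g) Θ ∧
  ∀ Θ', SLSConstraints (shiftMat n) (e1 n) (rowVec g) Θ' →
    cost g B₁ D₂₁ D₁₁ Θ ≤ cost g B₁ D₂₁ D₁₁ Θ'

/-- The FIR transfer function `G(z) = Σ_{t=1}^{r−1} g_t z^{−t}` for
`g = (g₁, …, g_{r−1})`. -/
def firTF {n : ℕ} (g : Fin n → ℝ) : TF :=
  ∑ t : Fin n, RatFunc.C (g t) * (RatFunc.X)⁻¹ ^ ((t : ℕ) + 1)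

/-- The FIR transfer function `G(z) = Σ_{k=0}^{T−1} g_k z^{−k}` for a full
impulse-response vector `g_{0:T−1}`. -/
def firTF0 {T : ℕ} (g : Fin T → ℝ) : TF :=
  ∑ k : Fin T, RatFunc.C (g k) * (RatFunc.X)⁻¹ ^ (k : ℕ)

/-! ### Coarse-grained identification -/

/-- Euclidean (ℓ2) norm of a finite real vector. -/
def euclNorm {r : ℕ} (x : Fin r → ℝ) : ℝ := Real.sqrt (∑ i, x i ^ 2)

/-- ℓp norm of a finite real vector, `p ∈ [1, ∞]`. -/
def lpNorm {T : ℕ} (p : ℝ≥0∞) (x : Fin T → ℝ) : ℝ :=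
  if p = ∞ then ⨆ i, |x i| else (∑ i, |x i| ^ p.toReal) ^ (1 / p.toReal)

/-- `r^{2/max(p,2)}` as a real number. -/
def rExp (p : ℝ≥0∞) (r : ℕ) : ℝ := (r : ℝ) ^ ((2 / max p 2).toReal)

/-- The T×T lower-triangular Toeplitz matrix whose first column is `u`. -/
def toep {T : ℕ} (u : Fin T → ℝ) : Matrix (Fin T) (Fin T) ℝ :=
  Matrix.of fun i j =>
    if (j : ℕ) ≤ (i : ℕ) then u ⟨(i : ℕ) - (j : ℕ), lt_of_le_of_lt (Nat.sub_le _ _) i.isLt⟩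
    else 0

/-- The stacked input matrix `Z_mat = [Toep(u₁); …; Toep(u_m)]`. -/
def Zmat {T mE : ℕ} (u : Fin mE → Fin T → ℝ) : Matrix (Fin mE × Fin T) (Fin T) ℝ :=
  Matrix.of fun pr j => toep (u pr.1) pr.2 j

/-- `Z_matᵀ Z_mat`. -/
def ZtZ {T mE : ℕ} (u : Fin mE → Fin T → ℝ) : Matrix (Fin T) (Fin T) ℝ :=
  (Zmat u)ᵀ * Zmat u

/-- The least-squares estimate `g̃_{0:T−1} = (Z_matᵀZ_mat)⁻¹Z_matᵀ(y₁; …; y_m)`. -/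
def lsEst {T mE : ℕ} (u : Fin mE → Fin T → ℝ) (y : Fin mE → Fin T → ℝ) : Fin T → ℝ :=
  ((ZtZ u)⁻¹ * (Zmat u)ᵀ).mulVec fun pr => y pr.1 pr.2

/-- Pad the FIR coefficients `g = (g₁, …, g_{r−1})` to the impulse response
`g_{0:T−1} = (0, g₁, …, g_{r−1}, 0, …, 0)`. -/
def pad {r T : ℕ} (_ : r ≤ T) (g : Fin (r - 1) → ℝ) : Fin T → ℝ := fun k =>
  if hk : 1 ≤ (k : ℕ) ∧ (k : ℕ) < r then g ⟨(k : ℕ) - 1, by omega⟩ else 0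

/-- The estimated FIR coefficients `g̃ = (g̃₁, …, g̃_{r−1})` from coarse-grained
identification with true coefficients `g` and additive noise on the outputs. -/
def coarseEst {r T mE : ℕ} (hrT : r ≤ T) (u : Fin mE → Fin T → ℝ)
    (g : Fin (r - 1) → ℝ) (noise : Fin mE → Fin T → ℝ) : Fin (r - 1) → ℝ :=
  fun i =>
    lsEst u (fun k => (toep (u k)).mulVec (pad hrT g) + noise k)
      ⟨(i : ℕ) + 1, by have := i.isLt; omega⟩

/-! ### Gaussian random vectors -/

/-- The standard Gaussian measure on `Fin r → ℝ` (i.i.d. `N(0,1)` coordinates). -/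
def stdGaussianPi (r : ℕ) : Measure (Fin r → ℝ) :=
  Measure.pi fun _ => gaussianReal 0 1

/-- `δ` is a centered Gaussian random vector with covariance `Cov`: its law is the
pushforward of the standard Gaussian under some `A` with `AAᵀ = Cov`. -/
def IsCenteredGaussianVec {Ω : Type} [MeasurableSpace Ω] (P : Measure Ω) {r : ℕ}
    (δ : Ω → Fin r → ℝ) (Cov : Matrix (Fin r) (Fin r) ℝ) : Prop :=
  ∃ A : Matrix (Fin r) (Fin r) ℝ, A * Aᵀ = Cov ∧
    Measure.map δ P = Measure.map (fun x => A.mulVec x) (stdGaussianPi r)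

/-- The law of i.i.d. `N(0, σ²)` noise across `mE` experiments of length `T`. -/
def iidGaussianLaw (mE T : ℕ) (σ2 : ℝ) : Measure (Fin mE → Fin T → ℝ) :=
  Measure.pi fun _ => Measure.pi fun _ => gaussianReal 0 σ2.toNNReal


/-- Scalar multiplication of a transfer matrix by a scalar transfer function. -/
def sMulTF {m n : ℕ} (c : TF) (M : TMat m n) : TMat m n := Matrix.of fun i j => c * M i j

/-- The perturbed response `Θ̂` with `R̂ = (I+Δ₁)⁻¹R̃`, `M̂ = M̃ − Δ₂(I+Δ₁)⁻¹R̃`,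
`N̂ = (I+Δ₁)⁻¹Ñ`, `L̂ = L̃ − Δ₂(I+Δ₁)⁻¹Ñ` (with the rational matrix inverse). -/
def deltaPerturb {n p q : ℕ} (Δ₁ : TMat n n) (Δ₂ : TMat p n) (Θ : Response n p q) :
    Response n p q where
  R := (1 + Δ₁)⁻¹ * Θ.R
  M := Θ.M - Δ₂ * ((1 + Δ₁)⁻¹ * Θ.R)
  N := (1 + Δ₁)⁻¹ * Θ.N
  L := Θ.L - Δ₂ * ((1 + Δ₁)⁻¹ * Θ.N)

/-- The Sherman–Morrison form of the perturbed response in the FIR SISO case: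
`[[R̂, N̂],[M̂, L̂]] = [[R̃, Ñ],[M̃, L̃]] + (1 − δᵀÑ)⁻¹·[Ñδᵀ; L̃δᵀ]·[R̃, Ñ]`. -/
def smPerturb {n : ℕ} (δ : Fin n → ℝ) (Θ : Response n 1 1) : Response n 1 1 where
  R := Θ.R + sMulTF (1 - (rmap (rowVec δ) * Θ.N) 0 0)⁻¹ (Θ.N * rmap (rowVec δ) * Θ.R)
  M := Θ.M + sMulTF (1 - (rmap (rowVec δ) * Θ.N) 0 0)⁻¹ (Θ.L * rmap (rowVec δ) * Θ.R)
  N := Θ.N + sMulTF (1 - (rmap (rowVec δ) * Θ.N) 0 0)⁻¹ (Θ.N * rmap (rowVec δ) * Θ.N)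
  L := Θ.L + sMulTF (1 - (rmap (rowVec δ) * Θ.N) 0 0)⁻¹ (Θ.L * rmap (rowVec δ) * Θ.N)

/-- The block-diagonal matrix with `m` copies of `Toep(g)` on the diagonal
(the action of `Toep(g)` on the stacked process noise of `m` experiments). -/
def bigToep {T mE : ℕ} (g : Fin T → ℝ) : Matrix (Fin mE × Fin T) (Fin mE × Fin T) ℝ :=
  Matrix.of fun pr qr => if pr.1 = qr.1 then toep g pr.2 qr.2 else 0

end SLS

open SLS

/-!
Properness and strict properness are the conditions `v f ≤ 1` and `v f < 1` for the valuation
`v` at infinity, and stable functions form a subring (the denominator of a sum or product divides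
the product of the denominators). Hence RH∞ is a ring, and its strictly proper elements form an
additive subgroup absorbing multiplication by RH∞. In particular `Δ₂ = M̃(zI − A) − L̃C₂` lies
in RH∞, because `M̃` is strictly proper and `zI − A` has degree one; so all of `R̂, M̂, N̂, L̂` are
stable, with `R̂, M̂, N̂` strictly proper.

The four robust equations give `B₂Δ₂ = (zI − A)Δ₁`, i.e. `(zI − A + B₂Δ₂)(I + Δ₁)⁻¹ = zI − A`,
which leaves the left constraints `[zI − A, −B₂]Θ = [I, 0]` unchanged. The right constraints
for `Θ̂` are those of `Θ̃` multiplied on the left by `[[(I + Δ₁)⁻¹, 0], [−Δ₂(I + Δ₁)⁻¹, I]]`,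
which sends `[I + Δ₁; Δ₂]` to `[I; 0]`.
-/

namespace SLS

open WithZero

/-- The valuation at infinity, `v f = exp (deg num f - deg denom f)` for `f ≠ 0`. -/
def vInfty : Valuation TF ℤᵐ⁰ := by
  classical exact RatFunc.inftyValuation ℝ

lemma vInfty_of_ne_zero {f : TF} (hf : f ≠ 0) : vInfty f = exp f.intDegree := by
  classical
  simp [vInfty, RatFunc.inftyValuation_apply, hf]

lemma properTF_iff_vInfty_le_one (f : TF) : ProperTF f ↔ vInfty f ≤ 1 := by
  rcases eq_or_ne f 0 with rfl | hf
  · simp [ProperTF]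
  rw [vInfty_of_ne_zero hf, ← exp_zero, exp_le_exp, RatFunc.intDegree, ProperTF,
    Polynomial.degree_eq_natDegree (RatFunc.num_ne_zero hf),
    Polynomial.degree_eq_natDegree f.denom_ne_zero, Nat.cast_le]
  omega

lemma strictlyProperTF_iff_vInfty_lt_one (f : TF) : StrictlyProperTF f ↔ vInfty f < 1 := by
  rcases eq_or_ne f 0 with rfl | hf
  · simp [StrictlyProperTF]
  rw [vInfty_of_ne_zero hf, ← exp_zero, exp_lt_exp, RatFunc.intDegree, StrictlyProperTF,
    Polynomial.degree_eq_natDegree (RatFunc.num_ne_zero hf),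
    Polynomial.degree_eq_natDegree f.denom_ne_zero, Nat.cast_lt]
  omega

lemma vInfty_algebraMap_le_exp_one {P : Polynomial ℝ} (hP : P.natDegree ≤ 1) :
    vInfty (algebraMap (Polynomial ℝ) TF P) ≤ exp 1 := by
  rcases eq_or_ne P 0 with rfl | hP0
  · simp
  rw [vInfty_of_ne_zero (by simpa using hP0), RatFunc.intDegree_polynomial, exp_le_exp]
  exact_mod_cast hP

lemma mul_le_one_of_lt_one_of_le_exp_one {a b : ℤᵐ⁰} (ha : a < 1) (hb : b ≤ exp 1) :
    a * b ≤ 1 := by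
  have ha' : a ≤ exp (-1) := by
    rwa [← lt_mul_exp_iff_le exp_ne_zero, ← exp_add, neg_add_cancel, exp_zero]
  calc a * b ≤ exp (-1) * exp 1 := mul_le_mul' ha' hb
    _ = 1 := by rw [← exp_add, neg_add_cancel, exp_zero]

lemma StableTF.of_denom_dvd {f g h : TF} (hd : f.denom ∣ g.denom * h.denom)
    (hg : StableTF g) (hh : StableTF h) : StableTF f := by
  intro z hz
  have hgh := Polynomial.eval_eq_zero_of_dvd_of_eval_eq_zero
    (Polynomial.map_dvd (algebraMap ℝ ℂ) hd) hz
  rw [Polynomial.map_mul, Polynomial.eval_mul, mul_eq_zero] at hgh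
  exact hgh.elim (hg z) (hh z)

lemma stableTF_algebraMap (P : Polynomial ℝ) : StableTF (algebraMap (Polynomial ℝ) TF P) := by
  intro z hz
  simp [RatFunc.denom_algebraMap] at hz

def stableSubring : Subring TF where
  carrier := {f | StableTF f}
  mul_mem' {f g} hf hg := StableTF.of_denom_dvd (RatFunc.denom_mul_dvd f g) hf hg
  one_mem' := by simpa using stableTF_algebraMap 1
  add_mem' {f g} hf hg := StableTF.of_denom_dvd (RatFunc.denom_add_dvd f g) hf hg
  zero_mem' := by simpa using stableTF_algebraMap 0
  neg_mem' {f} hf := by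
    rw [Set.mem_ofPred_eq, neg_eq_neg_one_mul]
    exact StableTF.of_denom_dvd (RatFunc.denom_mul_dvd _ f)
      (by simpa using stableTF_algebraMap (-1)) hf

def rhInf : Subring TF := vInfty.integer ⊓ stableSubring

def rhInfStrict : AddSubgroup TF := vInfty.ltAddSubgroup 1 ⊓ stableSubring.toAddSubgroup

lemma memRHinfTF_iff {f : TF} : MemRHinfTF f ↔ f ∈ rhInf := by
  rw [MemRHinfTF, properTF_iff_vInfty_le_one]; rfl

lemma mem_rhInfStrict_iff {f : TF} : f ∈ rhInfStrict ↔ StrictlyProperTF f ∧ StableTF f := by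
  rw [strictlyProperTF_iff_vInfty_lt_one]; rfl

lemma mem_rhInf_of_mem_rhInfStrict {f : TF} (hf : f ∈ rhInfStrict) : f ∈ rhInf :=
  ⟨(show vInfty f < 1 from hf.1).le, hf.2⟩

lemma mul_mem_rhInfStrict {f g : TF} (hf : f ∈ rhInfStrict) (hg : g ∈ rhInf) :
    f * g ∈ rhInfStrict := by
  refine ⟨?_, stableSubring.mul_mem hf.2 hg.2⟩
  show vInfty (f * g) < 1
  rw [map_mul]
  exact mul_lt_one_of_lt_of_le hf.1 hg.1

lemma mul_algebraMap_mem_rhInf {f : TF} (hf : f ∈ rhInfStrict) {P : Polynomial ℝ}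
    (hP : P.natDegree ≤ 1) : f * algebraMap (Polynomial ℝ) TF P ∈ rhInf := by
  refine ⟨?_, stableSubring.mul_mem hf.2 (stableTF_algebraMap P)⟩
  show vInfty _ ≤ 1
  rw [map_mul]
  exact mul_le_one_of_lt_one_of_le_exp_one hf.1 (vInfty_algebraMap_le_exp_one hP)

section Matrices

variable {a b c : ℕ}

def MemRHinfStrict (F : TMat a b) : Prop := ∀ i j, F i j ∈ rhInfStrict

lemma memRHinfStrict_iff {F : TMat a b} :
    MemRHinfStrict F ↔ StrictlyProper F ∧ MemRHinf F := by
  simp only [MemRHinfStrict, StrictlyProper, MemRHinf, mem_rhInfStrict_iff, MemRHinfTF,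
    ← forall_and]
  exact forall₂_congr fun _ _ => ⟨fun h => ⟨h.1, h.1.le, h.2⟩, fun h => ⟨h.1, h.2.2⟩⟩

lemma C_mem_rhInf (r : ℝ) : RatFunc.C r ∈ rhInf := by
  refine memRHinfTF_iff.1 ⟨?_, ?_⟩
  · simpa [ProperTF] using Polynomial.degree_C_le
  · rw [← RatFunc.algebraMap_C]; exact stableTF_algebraMap _

lemma MemRHinf.mul {F : TMat a b} {G : TMat b c} (hF : MemRHinf F) (hG : MemRHinf G) :
    MemRHinf (F * G) := fun i j => by
  rw [memRHinfTF_iff, Matrix.mul_apply]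
  exact Subring.sum_mem _ fun k _ =>
    mul_mem (memRHinfTF_iff.1 (hF i k)) (memRHinfTF_iff.1 (hG k j))

lemma MemRHinf.sub {F G : TMat a b} (hF : MemRHinf F) (hG : MemRHinf G) :
    MemRHinf (F - G) := fun i j =>
  memRHinfTF_iff.2 <| sub_mem (memRHinfTF_iff.1 (hF i j)) (memRHinfTF_iff.1 (hG i j))

lemma memRHinf_rmap (F : Matrix (Fin a) (Fin b) ℝ) : MemRHinf (rmap F) := fun i j =>
  memRHinfTF_iff.2 (C_mem_rhInf (F i j))

lemma MemRHinfStrict.memRHinf {F : TMat a b} (hF : MemRHinfStrict F) : MemRHinf F :=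
  fun i j => memRHinfTF_iff.2 (mem_rhInf_of_mem_rhInfStrict (hF i j))

lemma MemRHinfStrict.sub {F G : TMat a b} (hF : MemRHinfStrict F) (hG : MemRHinfStrict G) :
    MemRHinfStrict (F - G) := fun i j => sub_mem (hF i j) (hG i j)

lemma MemRHinfStrict.mul_memRHinf {F : TMat a b} {G : TMat b c} (hF : MemRHinfStrict F)
    (hG : MemRHinf G) : MemRHinfStrict (F * G) := fun i j => by
  rw [Matrix.mul_apply]
  exact AddSubgroup.sum_mem _ fun k _ => mul_mem_rhInfStrict (hF i k) (memRHinfTF_iff.1 (hG k j))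

lemma MemRHinf.mul_memRHinfStrict {F : TMat a b} {G : TMat b c} (hF : MemRHinf F)
    (hG : MemRHinfStrict G) : MemRHinfStrict (F * G) := fun i j => by
  rw [Matrix.mul_apply]
  refine AddSubgroup.sum_mem _ fun k _ => ?_
  rw [mul_comm]
  exact mul_mem_rhInfStrict (hG k j) (memRHinfTF_iff.1 (hF i k))

lemma zIA_apply (A : Matrix (Fin a) (Fin a) ℝ) (i j : Fin a) :
    zIA A i j = algebraMap (Polynomial ℝ) TF
      ((if i = j then Polynomial.X else 0) - Polynomial.C (A i j)) := by
  rw [map_sub]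
  simp only [zIA, rmap, Matrix.sub_apply, Matrix.diagonal_apply, Matrix.map_apply,
    RatFunc.algebraMap_C]
  split <;> simp [RatFunc.algebraMap_X]

lemma MemRHinfStrict.mul_zIA {F : TMat a b} (hF : MemRHinfStrict F)
    (A : Matrix (Fin b) (Fin b) ℝ) : MemRHinf (F * zIA A) := fun i j => by
  rw [memRHinfTF_iff, Matrix.mul_apply]
  refine Subring.sum_mem _ fun k _ => ?_
  rw [zIA_apply]
  refine mul_algebraMap_mem_rhInf (hF i k) ((Polynomial.natDegree_sub_le _ _).trans ?_)
  split <;> simp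

end Matrices

lemma mul_sub_mul_perturb_eq {K ι κ μ : Type*} [CommRing K] [Fintype ι] [DecidableEq ι]
    [Fintype κ] (P : Matrix ι ι K) (B : Matrix ι κ K) {Δ₁ : Matrix ι ι K} {Δ₂ : Matrix κ ι K}
    (hkey : B * Δ₂ = P * Δ₁) (hinv : IsUnit (1 + Δ₁).det) (W : Matrix ι μ K)
    (V : Matrix κ μ K) :
    P * ((1 + Δ₁)⁻¹ * W) - B * (V - Δ₂ * ((1 + Δ₁)⁻¹ * W)) = P * W - B * V := by
  calc P * ((1 + Δ₁)⁻¹ * W) - B * (V - Δ₂ * ((1 + Δ₁)⁻¹ * W))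
      = (P + B * Δ₂) * (1 + Δ₁)⁻¹ * W - B * V := by
        simp only [Matrix.mul_sub, Matrix.add_mul, Matrix.mul_assoc]; abel
    _ = P * ((1 + Δ₁) * (1 + Δ₁)⁻¹) * W - B * V := by
        rw [hkey, ← Matrix.mul_assoc P, Matrix.mul_add, Matrix.mul_one]
    _ = P * W - B * V := by rw [Matrix.mul_nonsing_inv _ hinv, Matrix.mul_one]

section Perturbation

variable {n p q : ℕ} {A : Matrix (Fin n) (Fin n) ℝ} {B₂ : Matrix (Fin n) (Fin p) ℝ}
  {C₂ : Matrix (Fin q) (Fin n) ℝ} {Δ₁ : TMat n n} {Δ₂ : TMat p n} {Θ : Response n p q}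

lemma slsStable_iff : SLSStable Θ ↔
    MemRHinfStrict Θ.R ∧ MemRHinfStrict Θ.M ∧ MemRHinfStrict Θ.N ∧ MemRHinf Θ.L := by
  simp only [SLSStable, memRHinfStrict_iff]
  tauto

lemma SLSStable.deltaPerturb (hΘ : SLSStable Θ) (hE : MemRHinf (1 + Δ₁)⁻¹)
    (hΔ₂ : MemRHinf Δ₂) : SLSStable (deltaPerturb Δ₁ Δ₂ Θ) := by
  obtain ⟨hR, hM, hN, hL⟩ := slsStable_iff.1 hΘ
  have hR' := hE.mul_memRHinfStrict hR
  have hN' := hE.mul_memRHinfStrict hN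
  exact slsStable_iff.2 ⟨hR', hM.sub (hΔ₂.mul_memRHinfStrict hR'), hN',
    hL.sub (hΔ₂.mul_memRHinfStrict hN').memRHinf⟩

lemma RobustSLSConstraints.memRHinf_delta₂ (h : RobustSLSConstraints A B₂ C₂ Δ₁ Δ₂ Θ) :
    MemRHinf Δ₂ := by
  obtain ⟨-, -, -, h4, hΘ⟩ := h
  obtain ⟨-, hM, -, hL⟩ := slsStable_iff.1 hΘ
  rw [← h4]
  exact (hM.mul_zIA A).sub (hL.mul (memRHinf_rmap C₂))

lemma RobustSLSConstraints.rmap_mul_delta₂ (h : RobustSLSConstraints A B₂ C₂ Δ₁ Δ₂ Θ) :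
    rmap B₂ * Δ₂ = zIA A * Δ₁ := by
  obtain ⟨h1, h2, h3, h4, -⟩ := h
  have hBM : rmap B₂ * Θ.M = zIA A * Θ.R - 1 := by rw [← h1, sub_sub_cancel]
  have hBL : rmap B₂ * Θ.L = zIA A * Θ.N := (sub_eq_zero.mp h2).symm
  calc rmap B₂ * Δ₂ = rmap B₂ * Θ.M * zIA A - rmap B₂ * Θ.L * rmap C₂ := by
        rw [← h4, Matrix.mul_sub, Matrix.mul_assoc, Matrix.mul_assoc]
    _ = zIA A * (Θ.R * zIA A - Θ.N * rmap C₂) - zIA A := by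
        rw [hBM, hBL, Matrix.sub_mul, Matrix.mul_sub, Matrix.one_mul, Matrix.mul_assoc,
          Matrix.mul_assoc]
        abel
    _ = zIA A * Δ₁ := by rw [h3, Matrix.mul_add, Matrix.mul_one, add_sub_cancel_left]

lemma deltaPerturb_R_mul_sub {k : ℕ} (X : TMat n k) (Y : TMat q k) :
    (deltaPerturb Δ₁ Δ₂ Θ).R * X - (deltaPerturb Δ₁ Δ₂ Θ).N * Y =
      (1 + Δ₁)⁻¹ * (Θ.R * X - Θ.N * Y) := by
  simp only [deltaPerturb, Matrix.mul_sub, Matrix.mul_assoc]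

lemma deltaPerturb_M_mul_sub {k : ℕ} (X : TMat n k) (Y : TMat q k) :
    (deltaPerturb Δ₁ Δ₂ Θ).M * X - (deltaPerturb Δ₁ Δ₂ Θ).L * Y =
      Θ.M * X - Θ.L * Y - Δ₂ * ((1 + Δ₁)⁻¹ * (Θ.R * X - Θ.N * Y)) := by
  simp only [deltaPerturb, Matrix.sub_mul, Matrix.mul_sub, Matrix.mul_assoc]
  abel

end Perturbation

end SLS

/-- if `Θ̃` satisfies the robust SLS constraints for `(A, B₂, C₂)` with
perturbations `(Δ₁, Δ₂)` and `(I + Δ₁)⁻¹` exists and lies in RH∞, then the perturbed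
response `Θ̂` satisfies the SLS constraints for `(A, B₂, C₂)`. -/
theorem statement_3 {n p q : ℕ} (A : Matrix (Fin n) (Fin n) ℝ)
    (B₂ : Matrix (Fin n) (Fin p) ℝ) (C₂ : Matrix (Fin q) (Fin n) ℝ)
    (Δ₁ : TMat n n) (Δ₂ : TMat p n) (Θ : Response n p q)
    (hrob : RobustSLSConstraints A B₂ C₂ Δ₁ Δ₂ Θ)
    (hinv : IsUnit (1 + Δ₁).det)
    (hstab : MemRHinf (1 + Δ₁)⁻¹) :
    SLSConstraints A B₂ C₂ (deltaPerturb Δ₁ Δ₂ Θ) := by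
  have hkey := hrob.rmap_mul_delta₂
  have hΔ₂ := hrob.memRHinf_delta₂
  obtain ⟨h1, h2, h3, h4, hΘ⟩ := hrob
  have hEE : (1 + Δ₁)⁻¹ * (1 + Δ₁) = 1 := Matrix.nonsing_inv_mul _ hinv
  refine ⟨?_, ?_, ?_, ?_, hΘ.deltaPerturb hstab hΔ₂⟩
  · rw [← h1]; exact mul_sub_mul_perturb_eq _ _ hkey hinv Θ.R Θ.M
  · rw [← h2]; exact mul_sub_mul_perturb_eq _ _ hkey hinv Θ.N Θ.L
  · rw [deltaPerturb_R_mul_sub, h3, hEE]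
  · rw [deltaPerturb_M_mul_sub, h4, h3, hEE, Matrix.mul_one, sub_self]
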